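/- arXiv:1012.3130 — 12 statements merged into one kernel-verified Lean document; each statement's English description precedes it below -/
import Mathlib

section
/- Let ι be a finite index set, n : ι → ℝ a nonnegative vector (true frequencies), n̂ : ι → ℝ (estimated frequencies), and γ, ε' ∈ (0,1]. Assume the estimates satisfy |n̂ j − n j| < (1/2) · ε' · γ · L2(n) for every j ∈ ι. If an index i satisfies n i > (1+ε') · γ · L2(n), then the number of indices j with n̂ j ≥ n̂ i is at most 1/γ²; equivalently γ² · card {j ∈ ι | n̂ j ≥ n̂ i} ≤ 1. (Every index whose estimate is at least as large as that of a (1+ε')γL2-heavy element is itself γL2-heavy, and there are at most 1/γ² such indices.) -/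
theorem heavy_estimate_dominators_are_few {ι : Type*} [Fintype ι]
    (n nh : ι → ℝ) (hn : ∀ j, 0 ≤ n j)
    (γ ε' : ℝ) (hγ0 : 0 < γ) (hγ1 : γ ≤ 1) (hε0 : 0 < ε') (hε1 : ε' ≤ 1)
    (hest : ∀ j, |nh j - n j| < (1 / 2) * ε' * γ * Real.sqrt (∑ j, (n j) ^ 2))
    (i : ι) (hi : n i > (1 + ε') * γ * Real.sqrt (∑ j, (n j) ^ 2)) :
    γ ^ 2 * ((Finset.univ.filter (fun j => nh j ≥ nh i)).card : ℝ) ≤ 1 := by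
  set L := Real.sqrt (∑ j, (n j) ^ 2) with hL
  have hsum_nonneg : 0 ≤ ∑ j, (n j) ^ 2 := Finset.sum_nonneg fun j _ => sq_nonneg _
  have hL2 : L ^ 2 = ∑ j, (n j) ^ 2 := Real.sq_sqrt hsum_nonneg
  have hni_le_L : n i ≤ L := by
    rw [hL]
    refine (Real.le_sqrt (hn i) hsum_nonneg).mpr ?_
    exact Finset.single_le_sum (fun j _ => sq_nonneg (n j)) (Finset.mem_univ i)
  have hLpos : 0 < L := by
    have : 0 < n i := lt_of_le_of_lt (by positivity) hi
    linarith
  -- every j in the filter is heavy: n j > γ * L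
  have hheavy : ∀ j ∈ Finset.univ.filter (fun j => nh j ≥ nh i), γ * L < n j := by
    intro j hj
    simp only [Finset.mem_filter] at hj
    have h1 := (abs_lt.mp (hest i)).1
    have h2 := (abs_lt.mp (hest j)).2
    have := hj.2
    nlinarith [hε0.le, hγ0.le]
  set S := Finset.univ.filter (fun j => nh j ≥ nh i)
  have key : (S.card : ℝ) * (γ * L) ^ 2 ≤ ∑ j, (n j) ^ 2 := by
    calc (S.card : ℝ) * (γ * L) ^ 2 = ∑ _j ∈ S, (γ * L) ^ 2 := by
          rw [Finset.sum_const, nsmul_eq_mul]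
      _ ≤ ∑ j ∈ S, (n j) ^ 2 := by
          refine Finset.sum_le_sum fun j hj => ?_
          have := hheavy j hj
          have hp : 0 < γ * L := mul_pos hγ0 hLpos
          nlinarith [hp]
      _ ≤ ∑ j, (n j) ^ 2 := Finset.sum_le_sum_of_subset_of_nonneg
          (Finset.filter_subset _ _) (fun j _ _ => sq_nonneg _)
  rw [← hL2] at key
  have hL2pos : 0 < L ^ 2 := by positivity
  rw [mul_pow] at key
  nlinarith [key]
end

section
/- Let ι be a finite index set, n : ι → ℝ a nonnegative vector (true frequencies), n̂ : ι → ℝ (estimated frequencies), and γ, ε' ∈ (0,1]. Assume |n̂ j − n j| < (1/2) · ε' · γ · L2(n) for every j ∈ ι. Let S be a finite subset of ι such that (card S : ℝ) > 1/γ² and such that n̂ a ≥ n̂ b for every a ∈ S and b ∉ S (S consists of top elements by estimated frequency). Then every index i with n i > (1+ε') · γ · L2(n) belongs to S. (Any sufficiently large top-k list by estimated frequencies contains all elements with true frequency at least (1+ε')γL2.) -/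
/-!
If a heavy index `i` were missing from `S`, then every `a ∈ S` has `n̂ a ≥ n̂ i`, and the estimation
error (less than `ε'γL/2` on each side) still leaves `n a > n i - ε'γL > γL`, with `L = L2(n)`.
But at most `1/γ²` coordinates of a vector can exceed `γ` times its L2 norm, contradicting
`card S > 1/γ²`.
-/

theorem abs_le_sqrt_sum_sq {ι : Type*} [Fintype ι] (n : ι → ℝ) (i : ι) :
    |n i| ≤ √(∑ j, n j ^ 2) :=
  Real.abs_le_sqrt <|
    Finset.single_le_sum (f := fun j => n j ^ 2) (fun _ _ => sq_nonneg _) (Finset.mem_univ i)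

theorem card_mul_sq_le_sum_sq {ι : Type*} [Fintype ι] (n : ι → ℝ) (S : Finset ι) {c : ℝ}
    (hc : 0 ≤ c) (h : ∀ a ∈ S, c ≤ |n a|) : S.card * c ^ 2 ≤ ∑ j, n j ^ 2 :=
  calc (S.card : ℝ) * c ^ 2 = ∑ _a ∈ S, c ^ 2 := by rw [Finset.sum_const, nsmul_eq_mul]
    _ ≤ ∑ a ∈ S, n a ^ 2 := Finset.sum_le_sum fun a ha => by
        simpa only [sq_abs] using pow_le_pow_left₀ hc (h a ha) 2
    _ ≤ ∑ j, n j ^ 2 :=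
        Finset.sum_le_sum_of_subset_of_nonneg (Finset.subset_univ S) fun _ _ _ => sq_nonneg _

theorem card_le_one_div_sq_of_forall_lt_abs {ι : Type*} [Fintype ι] (n : ι → ℝ) (S : Finset ι)
    {γ : ℝ} (hγ : 0 < γ) (h : ∀ a ∈ S, γ * √(∑ j, n j ^ 2) < |n a|) :
    (S.card : ℝ) ≤ 1 / γ ^ 2 := by
  obtain rfl | ⟨a, ha⟩ := S.eq_empty_or_nonempty
  · simp only [Finset.card_empty, Nat.cast_zero]
    positivity
  set L := √(∑ j, n j ^ 2) with hL
  have hL_pos : 0 < L :=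
    (mul_nonneg hγ.le (Real.sqrt_nonneg _)).trans_lt ((h a ha).trans_le (abs_le_sqrt_sum_sq n a))
  have hbound : S.card * (γ * L) ^ 2 ≤ L ^ 2 := by
    rw [hL, Real.sq_sqrt (Finset.sum_nonneg fun _ _ => sq_nonneg _)]
    exact card_mul_sq_le_sum_sq n S (by positivity) fun a ha => (h a ha).le
  rw [le_div_iff₀ (by positivity)]
  nlinarith [pow_pos hL_pos 2]

theorem sub_two_mul_lt_of_abs_sub_lt_of_le {a a' b b' δ : ℝ} (ha : |a' - a| < δ)
    (hb : |b' - b| < δ) (hab : b' ≤ a') : b - 2 * δ < a := by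
  linarith [(abs_lt.mp ha).2, (abs_lt.mp hb).1]

theorem top_list_contains_heavy_general {ι : Type*} [Fintype ι]
    (n nh : ι → ℝ)
    (γ ε' : ℝ) (hγ0 : 0 < γ)
    (hest : ∀ j, |nh j - n j| < (1 / 2) * ε' * γ * Real.sqrt (∑ j, (n j) ^ 2))
    (S : Finset ι) (hScard : (S.card : ℝ) > 1 / γ ^ 2)
    (hStop : ∀ a ∈ S, ∀ b ∉ S, nh b ≤ nh a)
    (i : ι) (hi : n i > (1 + ε') * γ * Real.sqrt (∑ j, (n j) ^ 2)) :
    i ∈ S := by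
  by_contra hiS
  set L := √(∑ j, n j ^ 2)
  have heavy : ∀ a ∈ S, γ * L < |n a| := fun a ha =>
    calc γ * L = (1 + ε') * γ * L - 2 * (1 / 2 * ε' * γ * L) := by ring
      _ < n i - 2 * (1 / 2 * ε' * γ * L) := by linarith
      _ < n a := sub_two_mul_lt_of_abs_sub_lt_of_le (hest a) (hest i) (hStop a ha i hiS)
      _ ≤ |n a| := le_abs_self _
  exact (card_le_one_div_sq_of_forall_lt_abs n S hγ0 heavy).not_gt hScard

theorem top_list_contains_heavy {ι : Type*} [Fintype ι]
    (n nh : ι → ℝ) (hn : ∀ j, 0 ≤ n j)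
    (γ ε' : ℝ) (hγ0 : 0 < γ) (hγ1 : γ ≤ 1) (hε0 : 0 < ε') (hε1 : ε' ≤ 1)
    (hest : ∀ j, |nh j - n j| < (1 / 2) * ε' * γ * Real.sqrt (∑ j, (n j) ^ 2))
    (S : Finset ι) (hScard : (S.card : ℝ) > 1 / γ ^ 2)
    (hStop : ∀ a ∈ S, ∀ b ∉ S, nh b ≤ nh a)
    (i : ι) (hi : n i > (1 + ε') * γ * Real.sqrt (∑ j, (n j) ^ 2)) :
    i ∈ S :=
  top_list_contains_heavy_general n nh γ ε' hγ0 hest S hScard hStop i hi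
end

section
/- Let ι be a finite index set, n : ι → ℝ a nonnegative vector (true frequencies), n̂ : ι → ℝ (estimated frequencies), γ, ε' ∈ (0,1], and f ≥ 0 a real number. Assume |n̂ j − n j| < (1/2) · ε' · γ · L2(n) for every j ∈ ι. Let T ⊆ ι be a finite set with n j ≥ f for every j ∈ T, and let S ⊆ ι be a finite set with card S ≤ card T such that n̂ a ≥ n̂ b for every a ∈ S and b ∉ S (S consists of top elements by estimated frequency). Then every i ∈ S satisfies n i ≥ f − ε' · γ · L2(n). (If at least |S| elements have true frequency ≥ f, then no element of true frequency below f − ε'γL2 can appear in the top-|S| list by estimates.) -/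
theorem top_list_elements_are_frequent {ι : Type*} [Fintype ι]
    (n nh : ι → ℝ) (hn : ∀ j, 0 ≤ n j)
    (γ ε' f : ℝ) (hγ0 : 0 < γ) (hγ1 : γ ≤ 1) (hε0 : 0 < ε') (hε1 : ε' ≤ 1)
    (hf : 0 ≤ f)
    (hest : ∀ j, |nh j - n j| < (1 / 2) * ε' * γ * Real.sqrt (∑ j, (n j) ^ 2))
    (T : Finset ι) (hT : ∀ j ∈ T, n j ≥ f)
    (S : Finset ι) (hcard : S.card ≤ T.card)
    (hStop : ∀ a ∈ S, ∀ b ∉ S, nh b ≤ nh a) :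
    ∀ i ∈ S, n i ≥ f - ε' * γ * Real.sqrt (∑ j, (n j) ^ 2) := by
  classical
  intro i hiS
  set L := Real.sqrt (∑ j, (n j) ^ 2) with hL
  have hL0 : 0 ≤ L := Real.sqrt_nonneg _
  have hc0 : 0 ≤ ε' * γ * L := by positivity
  by_cases hiT : i ∈ T
  · have := hT i hiT
    linarith
  · -- there is b ∈ T \ S
    have hTS : ¬ T ⊆ S := by
      intro hsub
      have h1 : T.card ≤ (S.erase i).card := by
        apply Finset.card_le_card
        intro x hx
        exact Finset.mem_erase.mpr ⟨fun h => hiT (h ▸ hx), hsub hx⟩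
      have h2 : (S.erase i).card < S.card := Finset.card_erase_lt_of_mem hiS
      omega
    obtain ⟨b, hbT, hbS⟩ := Finset.not_subset.mp hTS
    have h1 : nh b ≤ nh i := hStop i hiS b hbS
    have h2 := abs_lt.mp (hest i)
    have h3 := abs_lt.mp (hest b)
    have h4 : n b ≥ f := hT b hbT
    linarith
end

section
/- Let ι be a finite index set and m, n : ι → ℝ vectors with 0 ≤ m j ≤ n j for all j (m are the frequencies in the current window W, n the frequencies in the enclosing bucket A₁). Let ε ∈ [0,1) and ζ > 0 satisfy ζ² > ε, and assume L2(m)² > (1−ε) · L2(n)². If an index i satisfies n i > ζ · L2(n), then m i > sqrt(ζ² − ε) · L2(m). (An element that is ζ-heavy in the bucket is sqrt(ζ²−ε)-heavy in the window.) -/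
/-!
Let `M = ∑ m j ^ 2` and `N = ∑ n j ^ 2`. Since `0 ≤ m ≤ n`, every coordinate loses at most the total
squared mass: `n i ^ 2 - m i ^ 2 ≤ N - M`, and in particular `M ≤ N`. Hence
`m i ^ 2 ≥ n i ^ 2 - (N - M) > ζ ^ 2 N - ε N ≥ (ζ ^ 2 - ε) M`, and taking square roots gives the claim.
-/

open Finset

theorem sq_sub_sq_le_sum_sq_sub_sum_sq {ι R : Type*} [CommRing R] [LinearOrder R]
    [IsStrictOrderedRing R] (s : Finset ι) {m n : ι → R} (hm : ∀ j, 0 ≤ m j)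
    (hmn : ∀ j, m j ≤ n j) {i : ι} (hi : i ∈ s) :
    n i ^ 2 - m i ^ 2 ≤ ∑ j ∈ s, n j ^ 2 - ∑ j ∈ s, m j ^ 2 := by
  rw [← sum_sub_distrib]
  exact single_le_sum (fun j _ ↦ sub_nonneg.2 (pow_le_pow_left₀ (hm j) (hmn j) 2)) hi

theorem Real.sqrt_mul_sqrt_lt_iff {c M x : ℝ} (hc : 0 ≤ c) (hM : 0 ≤ M) (hx : 0 ≤ x) :
    √c * √M < x ↔ c * M < x ^ 2 := by
  rw [← Real.sqrt_mul hc, Real.sqrt_lt (mul_nonneg hc hM) hx]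

theorem bucket_heavy_implies_window_heavy_general {ι : Type*} [Fintype ι]
    (m n : ι → ℝ) (hm : ∀ j, 0 ≤ m j) (hmn : ∀ j, m j ≤ n j)
    (ε ζ : ℝ) (hζ : 0 < ζ) (hζε : ζ ^ 2 > ε)
    (hL : Real.sqrt (∑ j, (m j) ^ 2) ^ 2 > (1 - ε) * Real.sqrt (∑ j, (n j) ^ 2) ^ 2)
    (i : ι) (hi : n i > ζ * Real.sqrt (∑ j, (n j) ^ 2)) :
    m i > Real.sqrt (ζ ^ 2 - ε) * Real.sqrt (∑ j, (m j) ^ 2) := by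
  have hM : 0 ≤ ∑ j, m j ^ 2 := by positivity
  have hN : 0 ≤ ∑ j, n j ^ 2 := by positivity
  rw [Real.sq_sqrt hM, Real.sq_sqrt hN] at hL
  have hheavy : ζ ^ 2 * ∑ j, n j ^ 2 < n i ^ 2 :=
    (Real.sqrt_mul_sqrt_lt_iff (sq_nonneg ζ) hN ((hm i).trans (hmn i))).1
      (by rwa [Real.sqrt_sq hζ.le])
  have hloss := sq_sub_sq_le_sum_sq_sub_sum_sq univ hm hmn (mem_univ i)
  have hMN : ∑ j, m j ^ 2 ≤ ∑ j, n j ^ 2 := by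
    linarith [pow_le_pow_left₀ (hm i) (hmn i) 2]
  have hgap : 0 ≤ ζ ^ 2 - ε := sub_nonneg.2 hζε.le
  refine (Real.sqrt_mul_sqrt_lt_iff hgap hM (hm i)).2 ?_
  linarith [mul_le_mul_of_nonneg_left hMN hgap]

theorem bucket_heavy_implies_window_heavy {ι : Type*} [Fintype ι]
    (m n : ι → ℝ) (hm : ∀ j, 0 ≤ m j) (hmn : ∀ j, m j ≤ n j)
    (ε ζ : ℝ) (hε0 : 0 ≤ ε) (hε1 : ε < 1) (hζ : 0 < ζ) (hζε : ζ ^ 2 > ε)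
    (hL : Real.sqrt (∑ j, (m j) ^ 2) ^ 2 > (1 - ε) * Real.sqrt (∑ j, (n j) ^ 2) ^ 2)
    (i : ι) (hi : n i > ζ * Real.sqrt (∑ j, (n j) ^ 2)) :
    m i > Real.sqrt (ζ ^ 2 - ε) * Real.sqrt (∑ j, (m j) ^ 2) :=
  bucket_heavy_implies_window_heavy_general m n hm hmn ε ζ hζ hζε hL i hi
end

section
/- Let ι be a finite index set and m, n : ι → ℝ vectors with 0 ≤ m j ≤ n j for all j (m are the frequencies in the current window, n the frequencies in the enclosing bucket). Let 0 < ε ≤ 1/2 and γ > 0, and assume (1−ε/2) · L2(n) ≤ L2(m). If an index i satisfies m i ≥ (1+ε) · γ · L2(m), then n i ≥ (1+ε/4) · γ · L2(n). (Every element that is (1+ε)γ-heavy in the window is (1+ε/4)γ-heavy in the bucket.) -/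
theorem window_heavy_implies_bucket_heavy {ι : Type*} [Fintype ι]
    (m n : ι → ℝ) (hm : ∀ j, 0 ≤ m j) (hmn : ∀ j, m j ≤ n j)
    (ε γ : ℝ) (hε0 : 0 < ε) (hε1 : ε ≤ 1 / 2) (hγ : 0 < γ)
    (hL : (1 - ε / 2) * Real.sqrt (∑ j, (n j) ^ 2) ≤ Real.sqrt (∑ j, (m j) ^ 2))
    (i : ι) (hi : m i ≥ (1 + ε) * γ * Real.sqrt (∑ j, (m j) ^ 2)) :
    n i ≥ (1 + ε / 4) * γ * Real.sqrt (∑ j, (n j) ^ 2) := by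
  have hLn : 0 ≤ Real.sqrt (∑ j, (n j) ^ 2) := Real.sqrt_nonneg _
  have h1 : m i ≤ n i := hmn i
  nlinarith [mul_le_mul_of_nonneg_left hL (by positivity : (0:ℝ) ≤ (1+ε)*γ),
    mul_nonneg (mul_nonneg hε0.le hγ.le) hLn, sq_nonneg ε]
end

section
/- Let ι be a finite index set, m, n : ι → ℝ vectors with 0 ≤ m j ≤ n j for all j, and let 0 < ε ≤ 1 and γ > 0. Assume (1−ε/2) · L2(n) ≤ L2(m). Let i ∈ ι, let n̂ᵢ be a real number with |n̂ᵢ − n i| ≤ (ε/8) · γ · L2(n), and let L̂ be a real number with L̂ ≤ (1+ε) · L2(m). If m i > (1+ε) · γ · L2(m), then n̂ᵢ > γ · L̂ / (1+ε). (Every element that is (1+ε)γ-heavy in the window passes the output filter of the frequent-elements algorithm.) -/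
/-! Since `ε ≤ 1`, the hypothesis `(1 - ε/2)·L2(n) ≤ L2(m)` gives `L2(n) ≤ 2·L2(m)`, so the
estimate satisfies `n̂ᵢ ≥ nᵢ - (ε/4)·γ·L2(m) ≥ mᵢ - (ε/4)·γ·L2(m)`. Heaviness of `i` leaves a
margin of `ε·γ·L2(m)` above `γ·L2(m)`, which absorbs this error, while the filter threshold
`γ·L̂/(1+ε)` is at most `γ·L2(m)`. -/

theorem le_two_mul_of_one_sub_half_mul_le {ε a b : ℝ} (hε : ε ≤ 1) (hb : 0 ≤ b)
    (h : (1 - ε / 2) * b ≤ a) : b ≤ 2 * a := by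
  nlinarith

theorem mul_div_one_add_le_mul {γ ε L a : ℝ} (hγ : 0 ≤ γ) (hε : 0 < 1 + ε)
    (h : L ≤ (1 + ε) * a) : γ * L / (1 + ε) ≤ γ * a := by
  rw [mul_div_assoc]
  exact mul_le_mul_of_nonneg_left ((div_le_iff₀ hε).2 (by linarith)) hγ

theorem heavy_element_passes_filter_general {ι : Type*} [Fintype ι]
    (m n : ι → ℝ) (hmn : ∀ j, m j ≤ n j)
    (ε γ : ℝ) (hε0 : 0 < ε) (hε1 : ε ≤ 1) (hγ : 0 < γ)
    (hL : (1 - ε / 2) * Real.sqrt (∑ j, (n j) ^ 2) ≤ Real.sqrt (∑ j, (m j) ^ 2))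
    (i : ι) (nhi Lhat : ℝ)
    (hest : |nhi - n i| ≤ (ε / 8) * γ * Real.sqrt (∑ j, (n j) ^ 2))
    (hLhat : Lhat ≤ (1 + ε) * Real.sqrt (∑ j, (m j) ^ 2))
    (hi : m i > (1 + ε) * γ * Real.sqrt (∑ j, (m j) ^ 2)) :
    nhi > γ * Lhat / (1 + ε) := by
  set A := Real.sqrt (∑ j, (m j) ^ 2)
  set B := Real.sqrt (∑ j, (n j) ^ 2)
  have hA : 0 ≤ A := Real.sqrt_nonneg _
  have hBA : B ≤ 2 * A := le_two_mul_of_one_sub_half_mul_le hε1 (Real.sqrt_nonneg _) hL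
  have hni : n i - ε / 8 * γ * B ≤ nhi := by linarith [(abs_sub_le_iff.1 hest).2]
  calc γ * Lhat / (1 + ε) ≤ γ * A := mul_div_one_add_le_mul hγ.le (by linarith) hLhat
    _ ≤ (1 + ε) * γ * A - ε / 4 * γ * A := by nlinarith [mul_nonneg (mul_nonneg hε0.le hγ.le) hA]
    _ < m i - ε / 8 * γ * (2 * A) := by linarith
    _ ≤ n i - ε / 8 * γ * B := by gcongr; exact hmn i
    _ ≤ nhi := hni

theorem heavy_element_passes_filter {ι : Type*} [Fintype ι]
    (m n : ι → ℝ) (hm : ∀ j, 0 ≤ m j) (hmn : ∀ j, m j ≤ n j)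
    (ε γ : ℝ) (hε0 : 0 < ε) (hε1 : ε ≤ 1) (hγ : 0 < γ)
    (hL : (1 - ε / 2) * Real.sqrt (∑ j, (n j) ^ 2) ≤ Real.sqrt (∑ j, (m j) ^ 2))
    (i : ι) (nhi Lhat : ℝ)
    (hest : |nhi - n i| ≤ (ε / 8) * γ * Real.sqrt (∑ j, (n j) ^ 2))
    (hLhat : Lhat ≤ (1 + ε) * Real.sqrt (∑ j, (m j) ^ 2))
    (hi : m i > (1 + ε) * γ * Real.sqrt (∑ j, (m j) ^ 2)) :
    nhi > γ * Lhat / (1 + ε) :=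
  heavy_element_passes_filter_general m n hmn ε γ hε0 hε1 hγ hL i nhi Lhat hest hLhat hi
end

section
/- Let ι be a finite index set, m, n : ι → ℝ vectors with 0 ≤ m j ≤ n j for all j, and let 0 < ε ≤ 1/2 and γ > 0. Assume (1−ε/2) · L2(n) ≤ L2(m). Let i ∈ ι, let n̂ᵢ be a real number with |n̂ᵢ − n i| ≤ (ε/8) · γ · L2(n), and let L̂ be a real number with L̂ ≥ (1−ε) · L2(m). If n̂ᵢ > γ · L̂ / (1+ε), then n i > (1−3ε) · γ · L2(n). (Every element that passes the output filter of the frequent-elements algorithm has frequency greater than (1−3ε)γL2 in the bucket.) -/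
theorem filter_passers_are_bucket_heavy {ι : Type*} [Fintype ι]
    (m n : ι → ℝ) (hm : ∀ j, 0 ≤ m j) (hmn : ∀ j, m j ≤ n j)
    (ε γ : ℝ) (hε0 : 0 < ε) (hε1 : ε ≤ 1 / 2) (hγ : 0 < γ)
    (hL : (1 - ε / 2) * Real.sqrt (∑ j, (n j) ^ 2) ≤ Real.sqrt (∑ j, (m j) ^ 2))
    (i : ι) (nhi Lhat : ℝ)
    (hest : |nhi - n i| ≤ (ε / 8) * γ * Real.sqrt (∑ j, (n j) ^ 2))
    (hLhat : Lhat ≥ (1 - ε) * Real.sqrt (∑ j, (m j) ^ 2))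
    (hi : nhi > γ * Lhat / (1 + ε)) :
    n i > (1 - 3 * ε) * γ * Real.sqrt (∑ j, (n j) ^ 2) := by
  set L := Real.sqrt (∑ j, (n j) ^ 2) with hLdef
  set M := Real.sqrt (∑ j, (m j) ^ 2) with hMdef
  have hL0 : 0 ≤ L := Real.sqrt_nonneg _
  have hM0 : 0 ≤ M := Real.sqrt_nonneg _
  have h1 : nhi - n i ≤ (ε / 8) * γ * L := (abs_le.mp hest).2
  have hεp : (0:ℝ) < 1 + ε := by linarith
  have hi' : nhi * (1 + ε) > γ * Lhat := by
    have := (div_lt_iff₀ hεp).mp hi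
    linarith
  have hM : (1 - ε) * M ≤ Lhat := hLhat
  nlinarith [mul_nonneg hγ.le hL0, mul_nonneg (mul_nonneg hε0.le hγ.le) hL0,
    mul_nonneg (mul_nonneg (mul_nonneg hε0.le hε0.le) hγ.le) hL0,
    mul_le_mul_of_nonneg_left hL (mul_nonneg hγ.le (by linarith : (0:ℝ) ≤ 1 - ε))]
end

section
/- Let ι be a finite index set, m, n : ι → ℝ vectors with 0 ≤ m j ≤ n j for all j, and let 0 < ε ≤ 1/2 and γ ∈ (0,1] with (1−3ε) · γ > sqrt(ε). Assume (1−ε/2) · L2(n) ≤ L2(m). Let i ∈ ι, let n̂ᵢ be a real number with |n̂ᵢ − n i| ≤ (ε/8) · γ · L2(n), and let L̂ be a real number with L̂ ≥ (1−ε) · L2(m). If n̂ᵢ > γ · L̂ / (1+ε), then m i > sqrt((1−3ε)² · γ² − ε) · L2(m). (Combining the filter analysis with the window–bucket lemma: every element output by the filter is heavy in the window itself.) -/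
/-!
Write `s = L2(m)` and `t = L2(n)`, so `(1 - ε/2) t ≤ s ≤ t`. The estimate of `n i` is accurate to
`(ε/8) γ t`, so passing the filter forces `n i > (1 - 3ε) γ t`. Since `0 ≤ m ≤ n`, the window
loses at most `t² - s² ≤ ε t²` of squared mass on any single coordinate, whence
`m i² ≥ n i² - ε t² > ((1 - 3ε)² γ² - ε) t² ≥ ((1 - 3ε)² γ² - ε) s²`.
-/

open Finset

section L2

variable {ι : Type*} [Fintype ι]

noncomputable def l2Norm (v : ι → ℝ) : ℝ := √(∑ j, v j ^ 2)

theorem l2Norm_sq (v : ι → ℝ) : l2Norm v ^ 2 = ∑ j, v j ^ 2 :=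
  Real.sq_sqrt (sum_nonneg fun j _ => sq_nonneg (v j))

theorem l2Norm_le_l2Norm {m n : ι → ℝ} (hm : ∀ j, 0 ≤ m j) (hmn : ∀ j, m j ≤ n j) :
    l2Norm m ≤ l2Norm n :=
  Real.sqrt_le_sqrt (sum_le_sum fun j _ => pow_le_pow_left₀ (hm j) (hmn j) 2)

theorem sq_sub_sq_le_l2Norm_sq_sub {m n : ι → ℝ} (hm : ∀ j, 0 ≤ m j) (hmn : ∀ j, m j ≤ n j)
    (i : ι) : n i ^ 2 - m i ^ 2 ≤ l2Norm n ^ 2 - l2Norm m ^ 2 := by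
  rw [l2Norm_sq, l2Norm_sq, ← sum_sub_distrib]
  exact single_le_sum (f := fun j => n j ^ 2 - m j ^ 2)
    (fun j _ => sub_nonneg.mpr (pow_le_pow_left₀ (hm j) (hmn j) 2)) (mem_univ i)

end L2

theorem sq_sub_sq_le_mul_sq {ε s t : ℝ} (hε : ε ≤ 2) (ht : 0 ≤ t) (hts : (1 - ε / 2) * t ≤ s) :
    t ^ 2 - s ^ 2 ≤ ε * t ^ 2 := by
  have hsq : ((1 - ε / 2) * t) ^ 2 ≤ s ^ 2 :=
    pow_le_pow_left₀ (mul_nonneg (by linarith) ht) hts 2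
  nlinarith [sq_nonneg (ε * t)]

theorem lt_of_passes_filter {ε γ s t x xhat Lhat : ℝ} (hε0 : 0 ≤ ε) (hε1 : ε ≤ 1)
    (hγ : 0 ≤ γ) (ht : 0 ≤ t) (hts : (1 - ε / 2) * t ≤ s)
    (hest : |xhat - x| ≤ (ε / 8) * γ * t) (hLhat : Lhat ≥ (1 - ε) * s)
    (hpass : xhat > γ * Lhat / (1 + ε)) :
    (1 - 3 * ε) * γ * t < x := by
  have hpos : 0 < 1 + ε := by linarith
  have hx : xhat - (ε / 8) * γ * t ≤ x := by linarith [(abs_le.mp hest).2]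
  have hxhat : γ * ((1 - ε) * ((1 - ε / 2) * t)) < xhat * (1 + ε) := by
    rw [gt_iff_lt, div_lt_iff₀ hpos] at hpass
    calc γ * ((1 - ε) * ((1 - ε / 2) * t)) ≤ γ * ((1 - ε) * s) := by
          gcongr
      _ ≤ γ * Lhat := by gcongr
      _ < xhat * (1 + ε) := hpass
  -- `(1 - ε)(1 - ε/2) - (ε/8)(1 + ε) = (1 - 3ε)(1 + ε) + (3ε/8)(1 + 9ε)`
  have hslack : 0 ≤ γ * t * (3 * ε / 8 * (1 + 9 * ε)) := by positivity
  refine lt_of_mul_lt_mul_right ?_ hpos.le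
  nlinarith

theorem filter_passers_are_window_heavy_general {ι : Type*} [Fintype ι]
    (m n : ι → ℝ) (hm : ∀ j, 0 ≤ m j) (hmn : ∀ j, m j ≤ n j)
    (ε γ : ℝ) (hε0 : 0 < ε) (hγ0 : 0 < γ)
    (hγε : (1 - 3 * ε) * γ > Real.sqrt ε)
    (hL : (1 - ε / 2) * Real.sqrt (∑ j, (n j) ^ 2) ≤ Real.sqrt (∑ j, (m j) ^ 2))
    (i : ι) (nhi Lhat : ℝ)
    (hest : |nhi - n i| ≤ (ε / 8) * γ * Real.sqrt (∑ j, (n j) ^ 2))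
    (hLhat : Lhat ≥ (1 - ε) * Real.sqrt (∑ j, (m j) ^ 2))
    (hi : nhi > γ * Lhat / (1 + ε)) :
    m i > Real.sqrt ((1 - 3 * ε) ^ 2 * γ ^ 2 - ε) * Real.sqrt (∑ j, (m j) ^ 2) := by
  change (1 - ε / 2) * l2Norm n ≤ l2Norm m at hL
  change m i > _ * l2Norm m
  have hfactor : 0 < (1 - 3 * ε) * γ := (Real.sqrt_nonneg ε).trans_lt hγε
  have hε3 : 3 * ε < 1 := by nlinarith
  have hc : ε < ((1 - 3 * ε) * γ) ^ 2 := (Real.sqrt_lt' hfactor).mp hγε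
  have ht : 0 ≤ l2Norm n := Real.sqrt_nonneg _
  have hni : (1 - 3 * ε) * γ * l2Norm n < n i :=
    lt_of_passes_filter hε0.le (by linarith) hγ0.le ht hL hest hLhat hi
  have hwindow : n i ^ 2 - ε * l2Norm n ^ 2 ≤ m i ^ 2 := by
    linarith [sq_sub_sq_le_l2Norm_sq_sub hm hmn i, sq_sub_sq_le_mul_sq (by linarith) ht hL]
  refine lt_of_pow_lt_pow_left₀ 2 (hm i) ?_
  rw [mul_pow, Real.sq_sqrt (by nlinarith)]
  calc ((1 - 3 * ε) ^ 2 * γ ^ 2 - ε) * l2Norm m ^ 2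
      ≤ ((1 - 3 * ε) ^ 2 * γ ^ 2 - ε) * l2Norm n ^ 2 := by
        gcongr
        · nlinarith
        · exact Real.sqrt_nonneg _
        · exact l2Norm_le_l2Norm hm hmn
    _ = ((1 - 3 * ε) * γ * l2Norm n) ^ 2 - ε * l2Norm n ^ 2 := by ring
    _ < n i ^ 2 - ε * l2Norm n ^ 2 := by gcongr
    _ ≤ m i ^ 2 := hwindow

theorem filter_passers_are_window_heavy {ι : Type*} [Fintype ι]
    (m n : ι → ℝ) (hm : ∀ j, 0 ≤ m j) (hmn : ∀ j, m j ≤ n j)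
    (ε γ : ℝ) (hε0 : 0 < ε) (hε1 : ε ≤ 1 / 2) (hγ0 : 0 < γ) (hγ1 : γ ≤ 1)
    (hγε : (1 - 3 * ε) * γ > Real.sqrt ε)
    (hL : (1 - ε / 2) * Real.sqrt (∑ j, (n j) ^ 2) ≤ Real.sqrt (∑ j, (m j) ^ 2))
    (i : ι) (nhi Lhat : ℝ)
    (hest : |nhi - n i| ≤ (ε / 8) * γ * Real.sqrt (∑ j, (n j) ^ 2))
    (hLhat : Lhat ≥ (1 - ε) * Real.sqrt (∑ j, (m j) ^ 2))
    (hi : nhi > γ * Lhat / (1 + ε)) :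
    m i > Real.sqrt ((1 - 3 * ε) ^ 2 * γ ^ 2 - ε) * Real.sqrt (∑ j, (m j) ^ 2) :=
  filter_passers_are_window_heavy_general m n hm hmn ε γ hε0 hγ0 hγε hL i nhi Lhat hest hLhat hi
end

section
/- Let W_X, A_X, W_Y, A_Y be finite sets (Finsets) with W_X ⊆ A_X and W_Y ⊆ A_Y, and let ε' be a real number with 0 ≤ ε' < 1. Assume (1−ε') · |A_X| ≤ |W_X| and (1−ε') · |A_Y| ≤ |W_Y| (cardinalities as reals). Then |W_X ∪ W_Y| ≤ |A_X ∪ A_Y| ≤ ((1+ε')/(1−ε')) · |W_X ∪ W_Y|. -/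
theorem union_card_sandwich {α : Type*} [DecidableEq α]
    (WX AX WY AY : Finset α) (hX : WX ⊆ AX) (hY : WY ⊆ AY)
    (ε' : ℝ) (hε0 : 0 ≤ ε') (hε1 : ε' < 1)
    (hAX : (1 - ε') * (AX.card : ℝ) ≤ (WX.card : ℝ))
    (hAY : (1 - ε') * (AY.card : ℝ) ≤ (WY.card : ℝ)) :
    ((WX ∪ WY).card : ℝ) ≤ ((AX ∪ AY).card : ℝ) ∧
      ((AX ∪ AY).card : ℝ) ≤ ((1 + ε') / (1 - ε')) * ((WX ∪ WY).card : ℝ) := by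
  have h1 : (WX ∪ WY).card ≤ (AX ∪ AY).card :=
    Finset.card_le_card (Finset.union_subset_union hX hY)
  have hiW : WX ∩ WY ⊆ AX ∩ AY := Finset.inter_subset_inter hX hY
  have hi : ((WX ∩ WY).card : ℝ) ≤ ((AX ∩ AY).card : ℝ) := by
    exact_mod_cast Finset.card_le_card hiW
  have hUA : ((AX ∪ AY).card : ℝ) + ((AX ∩ AY).card : ℝ) = AX.card + AY.card := by
    exact_mod_cast Finset.card_union_add_card_inter AX AY
  have hUW : ((WX ∪ WY).card : ℝ) + ((WX ∩ WY).card : ℝ) = WX.card + WY.card := by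
    exact_mod_cast Finset.card_union_add_card_inter WX WY
  have hwx : ((WX ∩ WY).card : ℝ) ≤ WX.card := by
    exact_mod_cast Finset.card_le_card (Finset.inter_subset_left)
  have hwy : ((WX ∩ WY).card : ℝ) ≤ WY.card := by
    exact_mod_cast Finset.card_le_card (Finset.inter_subset_right)
  have hpos : (0:ℝ) < 1 - ε' := by linarith
  refine ⟨by exact_mod_cast h1, ?_⟩
  rw [div_mul_eq_mul_div, le_div_iff₀ hpos]
  nlinarith [hi, hUA, hUW, hwx, hwy]
end

section
/- Let W_X, A_X, W_Y, A_Y be finite sets (Finsets) with W_X ⊆ A_X and W_Y ⊆ A_Y, and let ε' be a real number with 0 ≤ ε' < 1. Assume (1−ε') · |A_X| ≤ |W_X|, (1−ε') · |A_Y| ≤ |W_Y|, and W_X ∪ W_Y is nonempty. Then J(A_X, A_Y) ≤ (1/(1−ε')) · J(W_X, W_Y) + ε'/(1−ε'). (The Jaccard similarity of the buckets is at most that of the windows, up to a 1/(1−ε') multiplicative and ε'/(1−ε') additive error.) -/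
/-!
An element of `A_X ∩ A_Y` missing from `W_X ∩ W_Y` lies in `A_X \ W_X` or in `A_Y \ W_Y`, and these
have at most `ε'|A_X|` and `ε'|A_Y|` elements. Since `|A_X| + |A_Y| = |A_X ∪ A_Y| + |A_X ∩ A_Y|`,
this gives `(1 - ε')|A_X ∩ A_Y| ≤ |W_X ∩ W_Y| + ε'|A_X ∪ A_Y|`; divide by `|A_X ∪ A_Y|` and use
`|W_X ∪ W_Y| ≤ |A_X ∪ A_Y|`.
-/

open Finset

namespace Finset

variable {α : Type*} [DecidableEq α]

theorem card_inter_le_card_inter_add_card_sdiff_add_card_sdiff (A B W V : Finset α) :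
    #(A ∩ B) ≤ #(W ∩ V) + #(A \ W) + #(B \ V) := by
  have hsub : A ∩ B ⊆ W ∩ V ∪ A \ W ∪ B \ V := by
    intro x hx
    simp only [mem_inter, mem_union, mem_sdiff] at hx ⊢
    tauto
  calc #(A ∩ B) ≤ #(W ∩ V ∪ A \ W ∪ B \ V) := card_le_card hsub
    _ ≤ #(W ∩ V ∪ A \ W) + #(B \ V) := card_union_le _ _
    _ ≤ #(W ∩ V) + #(A \ W) + #(B \ V) := by gcongr; exact card_union_le _ _

theorem card_sdiff_le_mul_card {W A : Finset α} (hWA : W ⊆ A) {ε : ℝ}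
    (h : (1 - ε) * #A ≤ #W) : (#(A \ W) : ℝ) ≤ ε * #A := by
  rw [card_sdiff_of_subset hWA, Nat.cast_sub (card_le_card hWA)]
  linarith

theorem one_sub_mul_card_inter_le {W A V B : Finset α} (hWA : W ⊆ A) (hVB : V ⊆ B) {ε : ℝ}
    (hA : (1 - ε) * #A ≤ #W) (hB : (1 - ε) * #B ≤ #V) :
    (1 - ε) * #(A ∩ B) ≤ #(W ∩ V) + ε * #(A ∪ B) := by
  have hcover : (#(A ∩ B) : ℝ) ≤ #(W ∩ V) + #(A \ W) + #(B \ V) := by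
    exact_mod_cast card_inter_le_card_inter_add_card_sdiff_add_card_sdiff A B W V
  have hsum : (#(A ∪ B) : ℝ) + #(A ∩ B) = #A + #B := by
    exact_mod_cast card_union_add_card_inter A B
  linear_combination hcover + card_sdiff_le_mul_card hWA hA + card_sdiff_le_mul_card hVB hB +
    ε * hsum.symm

end Finset

theorem jaccard_bucket_upper_bound_general {α : Type*} [DecidableEq α]
    (WX AX WY AY : Finset α) (hX : WX ⊆ AX) (hY : WY ⊆ AY)
    (ε' : ℝ) (hε1 : ε' < 1)
    (hAX : (1 - ε') * (AX.card : ℝ) ≤ (WX.card : ℝ))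
    (hAY : (1 - ε') * (AY.card : ℝ) ≤ (WY.card : ℝ))
    (hne : (WX ∪ WY).Nonempty) :
    ((AX ∩ AY).card : ℝ) / ((AX ∪ AY).card : ℝ) ≤
      (1 / (1 - ε')) * (((WX ∩ WY).card : ℝ) / ((WX ∪ WY).card : ℝ)) +
        ε' / (1 - ε') := by
  have hε : 0 < 1 - ε' := by linarith
  have hW : (0 : ℝ) < #(WX ∪ WY) := by exact_mod_cast hne.card_pos
  have hWA : (#(WX ∪ WY) : ℝ) ≤ #(AX ∪ AY) := by
    exact_mod_cast card_le_card (union_subset_union hX hY)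
  have hA : (0 : ℝ) < #(AX ∪ AY) := hW.trans_le hWA
  have hkey := one_sub_mul_card_inter_le hX hY hAX hAY
  calc (#(AX ∩ AY) : ℝ) / #(AX ∪ AY)
      ≤ 1 / (1 - ε') * (#(WX ∩ WY) / #(AX ∪ AY)) + ε' / (1 - ε') := by
        rw [div_le_iff₀ hA]
        field_simp
        linarith
    _ ≤ 1 / (1 - ε') * (#(WX ∩ WY) / #(WX ∪ WY)) + ε' / (1 - ε') := by
        gcongr

theorem jaccard_bucket_upper_bound {α : Type*} [DecidableEq α]
    (WX AX WY AY : Finset α) (hX : WX ⊆ AX) (hY : WY ⊆ AY)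
    (ε' : ℝ) (hε0 : 0 ≤ ε') (hε1 : ε' < 1)
    (hAX : (1 - ε') * (AX.card : ℝ) ≤ (WX.card : ℝ))
    (hAY : (1 - ε') * (AY.card : ℝ) ≤ (WY.card : ℝ))
    (hne : (WX ∪ WY).Nonempty) :
    ((AX ∩ AY).card : ℝ) / ((AX ∪ AY).card : ℝ) ≤
      (1 / (1 - ε')) * (((WX ∩ WY).card : ℝ) / ((WX ∪ WY).card : ℝ)) +
        ε' / (1 - ε') :=
  jaccard_bucket_upper_bound_general WX AX WY AY hX hY ε' hε1 hAX hAY hne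
end

section
/- Let W_X, A_X, W_Y, A_Y be finite sets (Finsets) with W_X ⊆ A_X and W_Y ⊆ A_Y, and let ε' be a real number with 0 ≤ ε' < 1. Assume (1−ε') · |A_X| ≤ |W_X|, (1−ε') · |A_Y| ≤ |W_Y|, and W_X ∪ W_Y is nonempty. Then J(A_X, A_Y) ≥ ((1−ε')/(1+ε')) · J(W_X, W_Y). (The Jaccard similarity of the buckets is at least (1−ε')/(1+ε') times that of the windows.) -/
/-!
By inclusion–exclusion and `|W_X ∩ W_Y| ≤ |A_X ∩ A_Y|`, the size bounds give
`(1 - ε') |A_X ∪ A_Y| ≤ |W_X ∪ W_Y| + ε' |W_X ∩ W_Y| ≤ (1 + ε') |W_X ∪ W_Y|`,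
while passing from the windows to the buckets can only enlarge the intersection.
-/

open Finset

namespace Finset

variable {α : Type*} [DecidableEq α]

/-- Junk value: `jaccard ∅ ∅ = 0`. -/
noncomputable def jaccard (S Q : Finset α) : ℝ := (#(S ∩ Q) : ℝ) / #(S ∪ Q)

theorem div_mul_jaccard_le_jaccard {W₁ W₂ A₁ A₂ : Finset α} (h₁ : W₁ ⊆ A₁) (h₂ : W₂ ⊆ A₂)
    (hne : (W₁ ∪ W₂).Nonempty) {r s : ℝ} (hs : 0 < s)
    (hunion : r * #(A₁ ∪ A₂) ≤ s * #(W₁ ∪ W₂)) :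
    r / s * jaccard W₁ W₂ ≤ jaccard A₁ A₂ := by
  have hinter : (#(W₁ ∩ W₂) : ℝ) ≤ #(A₁ ∩ A₂) := by
    exact_mod_cast card_le_card (inter_subset_inter h₁ h₂)
  have hW : (0 : ℝ) < #(W₁ ∪ W₂) := by exact_mod_cast hne.card_pos
  have hA : (0 : ℝ) < #(A₁ ∪ A₂) := by
    exact_mod_cast (hne.mono (union_subset_union h₁ h₂)).card_pos
  rw [jaccard, jaccard, div_mul_div_comm, div_le_div_iff₀ (by positivity) hA]
  calc r * #(W₁ ∩ W₂) * #(A₁ ∪ A₂) = #(W₁ ∩ W₂) * (r * #(A₁ ∪ A₂)) := by ring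
    _ ≤ #(W₁ ∩ W₂) * (s * #(W₁ ∪ W₂)) := by gcongr
    _ ≤ #(A₁ ∩ A₂) * (s * #(W₁ ∪ W₂)) := by gcongr

theorem one_sub_mul_card_union_le_one_add_mul {W₁ W₂ A₁ A₂ : Finset α} (h₁ : W₁ ⊆ A₁)
    (h₂ : W₂ ⊆ A₂) {ε : ℝ} (hε0 : 0 ≤ ε) (hε1 : ε ≤ 1)
    (hA₁ : (1 - ε) * #A₁ ≤ #W₁) (hA₂ : (1 - ε) * #A₂ ≤ #W₂) :
    (1 - ε) * #(A₁ ∪ A₂) ≤ (1 + ε) * #(W₁ ∪ W₂) := by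
  have hinter : (#(W₁ ∩ W₂) : ℝ) ≤ #(A₁ ∩ A₂) := by
    exact_mod_cast card_le_card (inter_subset_inter h₁ h₂)
  have hinter_union : (#(W₁ ∩ W₂) : ℝ) ≤ #(W₁ ∪ W₂) := by
    exact_mod_cast card_le_card inter_subset_union
  have hA : (#(A₁ ∪ A₂) : ℝ) + #(A₁ ∩ A₂) = #A₁ + #A₂ := by
    exact_mod_cast card_union_add_card_inter A₁ A₂
  have hW : (#(W₁ ∪ W₂) : ℝ) + #(W₁ ∩ W₂) = #W₁ + #W₂ := by
    exact_mod_cast card_union_add_card_inter W₁ W₂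
  have hinter_mul : (1 - ε) * #(W₁ ∩ W₂) ≤ (1 - ε) * #(A₁ ∩ A₂) := by gcongr
  have hinter_union_mul : ε * #(W₁ ∩ W₂) ≤ ε * #(W₁ ∪ W₂) := by gcongr
  linear_combination hA₁ + hA₂ + (1 - ε) * hA - hW + hinter_mul + hinter_union_mul

end Finset

theorem jaccard_bucket_lower_bound {α : Type*} [DecidableEq α]
    (WX AX WY AY : Finset α) (hX : WX ⊆ AX) (hY : WY ⊆ AY)
    (ε' : ℝ) (hε0 : 0 ≤ ε') (hε1 : ε' < 1)
    (hAX : (1 - ε') * (AX.card : ℝ) ≤ (WX.card : ℝ))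
    (hAY : (1 - ε') * (AY.card : ℝ) ≤ (WY.card : ℝ))
    (hne : (WX ∪ WY).Nonempty) :
    ((AX ∩ AY).card : ℝ) / ((AX ∪ AY).card : ℝ) ≥
      ((1 - ε') / (1 + ε')) * (((WX ∩ WY).card : ℝ) / ((WX ∪ WY).card : ℝ)) :=
  div_mul_jaccard_le_jaccard hX hY hne (by linarith)
    (one_sub_mul_card_union_le_one_add_mul hX hY hε0 hε1.le hAX hAY)
end

section
/- Let ι be a finite index set, let a, b, c : ι → ℝ be vectors with 0 ≤ b j ≤ a j and 0 ≤ c j for all j ∈ ι, and let ε be a real number with 0 < ε ≤ 1/2. If (1 − ε²/2) · L2(a) ≤ L2(b), then (1 − ε) · L2(a + c) ≤ L2(b + c). (The L2 frequency norm is an (ε, ε²/2)-smooth function: if a suffix B of a stream A has L2 norm at least (1−ε²/2) that of A, then after appending any stream C, the L2 norm of B∪C is at least (1−ε) that of A∪C; appending C adds the frequency vector c to both a and b.) -/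
private lemma l2_key_ineq (A C Sb Sac D ε : ℝ) (hA0 : 0 ≤ A) (hC0 : 0 ≤ C)
    (hSac0 : 0 ≤ Sac) (hD : D ≤ ε * A * C) (hSb : (1 - ε ^ 2 / 2) ^ 2 * A ^ 2 ≤ Sb)
    (hε0 : 0 < ε) (hε1 : ε ≤ 1 / 2) :
    (1 - ε) ^ 2 * (A ^ 2 + 2 * Sac + C ^ 2) ≤ Sb + 2 * (Sac - D) + C ^ 2 := by
  have h12 : (0:ℝ) ≤ 1 - 2 * ε := by linarith
  nlinarith [mul_nonneg hε0.le (sq_nonneg (A - C)),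
    mul_nonneg (mul_nonneg hε0.le h12) (sq_nonneg A),
    mul_nonneg (mul_nonneg hε0.le h12) (sq_nonneg C),
    mul_nonneg hε0.le hSac0, mul_nonneg (mul_nonneg hε0.le hε0.le) hSac0,
    sq_nonneg (ε ^ 2 * A), mul_nonneg hA0 hC0]

theorem l2_is_smooth {ι : Type*} [Fintype ι]
    (a b c : ι → ℝ) (hb : ∀ j, 0 ≤ b j) (hba : ∀ j, b j ≤ a j) (hc : ∀ j, 0 ≤ c j)
    (ε : ℝ) (hε0 : 0 < ε) (hε1 : ε ≤ 1 / 2)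
    (h : (1 - ε ^ 2 / 2) * Real.sqrt (∑ j, (a j) ^ 2) ≤ Real.sqrt (∑ j, (b j) ^ 2)) :
    (1 - ε) * Real.sqrt (∑ j, (a j + c j) ^ 2) ≤
      Real.sqrt (∑ j, (b j + c j) ^ 2) := by
  have ha : ∀ j, 0 ≤ a j := fun j => (hb j).trans (hba j)
  set Sa := ∑ j, (a j) ^ 2 with hSa
  set Sb := ∑ j, (b j) ^ 2 with hSb
  set Sc := ∑ j, (c j) ^ 2 with hSc
  have hSa0 : 0 ≤ Sa := Finset.sum_nonneg fun j _ => sq_nonneg _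
  have hSb0 : 0 ≤ Sb := Finset.sum_nonneg fun j _ => sq_nonneg _
  have hSc0 : 0 ≤ Sc := Finset.sum_nonneg fun j _ => sq_nonneg _
  set A := Real.sqrt Sa with hA
  set C := Real.sqrt Sc with hC
  have hA0 : 0 ≤ A := Real.sqrt_nonneg _
  have hC0 : 0 ≤ C := Real.sqrt_nonneg _
  have hA2 : A ^ 2 = Sa := Real.sq_sqrt hSa0
  have hC2 : C ^ 2 = Sc := Real.sq_sqrt hSc0
  have hεb : 0 ≤ 1 - ε ^ 2 / 2 := by nlinarith
  -- b² lower bound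
  have hSbA : (1 - ε ^ 2 / 2) ^ 2 * Sa ≤ Sb := by
    have h2 := mul_le_mul h h (by positivity) (Real.sqrt_nonneg _)
    nlinarith [Real.mul_self_sqrt hSb0, hA2, h2]
  -- sum of (a-b)^2 is ≤ Sa - Sb
  have hdiff : ∑ j, (a j - b j) ^ 2 ≤ Sa - Sb := by
    rw [hSa, hSb, ← Finset.sum_sub_distrib]
    apply Finset.sum_le_sum
    intro j _
    nlinarith [hb j, hba j]
  -- Cauchy-Schwarz on (a-b) and c
  set D := ∑ j, (a j - b j) * c j with hD
  have hD0 : 0 ≤ D := Finset.sum_nonneg fun j _ => mul_nonneg (by linarith [hba j, hb j]) (hc j)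
  have hCS : D ^ 2 ≤ (∑ j, (a j - b j) ^ 2) * Sc :=
    Finset.sum_mul_sq_le_sq_mul_sq _ _ _
  have hDle : D ≤ ε * A * C := by
    have h1 : D ^ 2 ≤ (ε * A * C) ^ 2 := by
      calc D ^ 2 ≤ (∑ j, (a j - b j) ^ 2) * Sc := hCS
        _ ≤ (Sa - Sb) * Sc := mul_le_mul_of_nonneg_right hdiff hSc0
        _ ≤ (ε ^ 2 * Sa) * Sc := by
            apply mul_le_mul_of_nonneg_right _ hSc0
            nlinarith [hSbA, mul_nonneg (mul_nonneg (sq_nonneg ε) (sq_nonneg ε)) hSa0]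
        _ = (ε * A * C) ^ 2 := by rw [← hA2, ← hC2]; ring
    have h2 : 0 ≤ ε * A * C := by positivity
    nlinarith
  -- expand the sums
  set Sac := ∑ j, a j * c j with hSac
  have hSac0 : 0 ≤ Sac :=
    Finset.sum_nonneg fun j _ => mul_nonneg (ha j) (hc j)
  have hexp_a : ∑ j, (a j + c j) ^ 2 = Sa + 2 * Sac + Sc := by
    rw [hSa, hSac, hSc, Finset.mul_sum, ← Finset.sum_add_distrib, ← Finset.sum_add_distrib]
    exact Finset.sum_congr rfl fun j _ => by ring
  have hexp_b : ∑ j, (b j + c j) ^ 2 = Sb + 2 * (Sac - D) + Sc := by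
    have hbc : Sac - D = ∑ j, b j * c j := by
      rw [hSac, hD, ← Finset.sum_sub_distrib]
      exact Finset.sum_congr rfl fun j _ => by ring
    rw [hSb, hbc, hSc, Finset.mul_sum, ← Finset.sum_add_distrib, ← Finset.sum_add_distrib]
    exact Finset.sum_congr rfl fun j _ => by ring
  rw [hexp_a, hexp_b]
  have hε' : 0 ≤ 1 - ε := by linarith
  have key : (1 - ε) ^ 2 * (Sa + 2 * Sac + Sc) ≤ Sb + 2 * (Sac - D) + Sc := by
    have := l2_key_ineq A C Sb Sac D ε hA0 hC0 hSac0 hDle (by rw [hA2]; exact hSbA) hε0 hε1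
    rw [hA2, hC2] at this
    exact this
  calc (1 - ε) * Real.sqrt (Sa + 2 * Sac + Sc)
      = Real.sqrt ((1 - ε) ^ 2 * (Sa + 2 * Sac + Sc)) := by
        rw [Real.sqrt_mul (sq_nonneg _), Real.sqrt_sq hε']
    _ ≤ Real.sqrt (Sb + 2 * (Sac - D) + Sc) := Real.sqrt_le_sqrt key
end
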